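/- arXiv:2004.01700 — 2 statements merged into one kernel-verified Lean document; each statement's English description precedes it below -/
import Mathlib

section
/- For every real ξ with 0 ≤ ξ < 1, the integral ∫₀^π dψ / (1 − ξ cos ψ)^{3/2} equals (π/(1+ξ)^{3/2}) · ₂F₁(1/2, 3/2; 1; 2ξ/(1+ξ)). -/
/-!
Writing `1 - ξ cos ψ = (1 + ξ) (1 - m cos² (ψ/2))` with `m = 2ξ/(1+ξ) ∈ [0,1)`, expand
`(1 - m cos² (ψ/2))^(-3/2)` by the binomial series `∑ (3/2)ₙ/n! mⁿ cos²ⁿ (ψ/2)` and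
integrate termwise, which is legitimate because the series is dominated by the absolutely
convergent `∑ |(3/2)ₙ/n! mⁿ|`. The Wallis integral `∫₀^π cos²ⁿ (ψ/2) dψ = π (1/2)ₙ/n!`
then turns the result into `π ₂F₁(1/2, 3/2; 1; m)`.
-/

open Real intervalIntegral

/-- Pochhammer symbol `(a)_n` for real `a`. -/
noncomputable def poch (a : ℝ) (n : ℕ) : ℝ := ∏ i ∈ Finset.range n, (a + i)

/-- Gauss hypergeometric function `₂F₁(a,b;c;x)` as a power series (for `|x| < 1`). -/
noncomputable def hyp2F1 (a b c x : ℝ) : ℝ :=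
  ∑' n : ℕ, (poch a n * poch b n) / (poch c n * n.factorial) * x ^ n

open MeasureTheory

lemma poch_succ (a : ℝ) (n : ℕ) : poch a (n + 1) = poch a n * (a + n) :=
  Finset.prod_range_succ _ _

lemma poch_eq_ascPochhammer_eval (a : ℝ) (n : ℕ) : poch a n = (ascPochhammer ℝ n).eval a := by
  induction n with
  | zero => simp [poch]
  | succ n ih => rw [poch_succ, ih, ascPochhammer_succ_eval]

lemma ringChoose_add_sub_one_eq_poch_div_factorial (a : ℝ) (n : ℕ) :
    Ring.choose (a + n - 1) n = poch a n / n.factorial := by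
  rw [Ring.choose_eq_smul, Polynomial.descPochhammer_smeval_eq_ascPochhammer,
    Polynomial.ascPochhammer_smeval_eq_eval, poch_eq_ascPochhammer_eval, smul_eq_mul,
    inv_mul_eq_div]
  congr 2
  ring

theorem hasSum_poch_div_factorial_mul_pow (a : ℝ) {x : ℝ} (hx : |x| < 1) :
    HasSum (fun n => poch a n / n.factorial * x ^ n) ((1 - x) ^ (-a)) := by
  have h := (one_div_one_sub_rpow_hasFPowerSeriesOnBall_zero a).hasSum
    (y := x) (by simpa [Metric.mem_eball, edist_dist] using hx)
  simp only [FormalMultilinearSeries.ofScalars_apply_eq,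
    ringChoose_add_sub_one_eq_poch_div_factorial, smul_eq_mul, zero_add] at h
  rwa [one_div, ← rpow_neg (by linarith [neg_abs_le x, le_abs_self x])] at h

lemma poch_one (n : ℕ) : poch 1 n = n.factorial := by
  induction n with
  | zero => simp [poch]
  | succ n ih => rw [poch_succ, ih, Nat.factorial_succ]; push_cast; ring

lemma poch_half_div_factorial_eq_prod (n : ℕ) :
    poch (1 / 2) n / n.factorial = ∏ i ∈ Finset.range n, (2 * (i : ℝ) + 1) / (2 * i + 2) := by
  induction n with
  | zero => simp [poch]
  | succ n ih =>
    rw [Finset.prod_range_succ, ← ih, poch_succ, Nat.factorial_succ]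
    push_cast
    field_simp
    ring

theorem integral_one_add_cos_div_two_pow (n : ℕ) :
    ∫ ψ in (0:ℝ)..π, ((1 + cos ψ) / 2) ^ n = π * (poch (1 / 2) n / n.factorial) := by
  have h : ∀ ψ, ((1 + cos ψ) / 2) ^ n = cos (ψ / 2) ^ (2 * n) := fun ψ => by
    rw [pow_mul, cos_sq, mul_div_cancel₀ _ two_ne_zero]; ring
  simp_rw [h]
  rw [intervalIntegral.integral_comp_div (fun θ => cos θ ^ (2 * n)) two_ne_zero, zero_div,
    EulerSine.integral_cos_pow_eq, smul_eq_mul, integral_sin_pow_even,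
    poch_half_div_factorial_eq_prod]
  ring

theorem integral_poch_div_factorial_mul_pow_one_add_cos (a m : ℝ) (n : ℕ) :
    ∫ ψ in (0:ℝ)..π, poch a n / n.factorial * (m * ((1 + cos ψ) / 2)) ^ n =
      π * (poch (1 / 2) n * poch a n / (poch 1 n * n.factorial) * m ^ n) := by
  simp_rw [mul_pow, ← mul_assoc, intervalIntegral.integral_const_mul,
    integral_one_add_cos_div_two_pow, poch_one]
  ring

theorem integral_one_sub_mul_one_add_cos_rpow_neg (a : ℝ) {m : ℝ} (hm : |m| < 1) :
    ∫ ψ in (0:ℝ)..π, (1 - m * ((1 + cos ψ) / 2)) ^ (-a) = π * hyp2F1 (1 / 2) a 1 m := by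
  have hcos : ∀ ψ, |(1 + cos ψ) / 2| ≤ 1 := fun ψ => by
    rw [abs_le]; constructor <;> linarith [neg_one_le_cos ψ, cos_le_one ψ]
  have hbound : ∀ n ψ, ‖poch a n / n.factorial * (m * ((1 + cos ψ) / 2)) ^ n‖ ≤
      |poch a n / n.factorial * m ^ n| := fun n ψ => by
    rw [norm_eq_abs, mul_pow, ← mul_assoc, abs_mul, abs_pow]
    exact mul_le_of_le_one_right (abs_nonneg _) (pow_le_one₀ (abs_nonneg _) (hcos ψ))
  have hconv : ∀ ψ, HasSum (fun n => poch a n / n.factorial * (m * ((1 + cos ψ) / 2)) ^ n)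
      ((1 - m * ((1 + cos ψ) / 2)) ^ (-a)) := fun ψ => by
    refine hasSum_poch_div_factorial_mul_pow a ?_
    rw [abs_mul]
    exact (mul_le_of_le_one_right (abs_nonneg m) (hcos ψ)).trans_lt hm
  have hdom := (hasSum_poch_div_factorial_mul_pow a hm).summable
  have hterms : HasSum
      (fun n => ∫ ψ in (0:ℝ)..π, poch a n / n.factorial * (m * ((1 + cos ψ) / 2)) ^ n)
      (∫ ψ in (0:ℝ)..π, (1 - m * ((1 + cos ψ) / 2)) ^ (-a)) :=
    intervalIntegral.hasSum_integral_of_dominated_convergence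
      (fun n _ => |poch a n / n.factorial * m ^ n|) (fun n => by fun_prop)
      (fun n => ae_of_all _ fun ψ _ => hbound n ψ)
      (ae_of_all _ fun _ _ => summable_abs_iff.mpr hdom)
      intervalIntegrable_const (ae_of_all _ fun ψ _ => hconv ψ)
  simp only [integral_poch_div_factorial_mul_pow_one_add_cos] at hterms
  rw [← hterms.tsum_eq, tsum_mul_left, hyp2F1]

theorem integral_I1_eq_hyp (ξ : ℝ) (h0 : 0 ≤ ξ) (h1 : ξ < 1) :
    ∫ ψ in (0:ℝ)..π, (1 - ξ * Real.cos ψ) ^ (-(3/2) : ℝ) =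
      π / (1 + ξ) ^ ((3/2) : ℝ) * hyp2F1 (1/2) (3/2) 1 (2 * ξ / (1 + ξ)) := by
  have hξ : 0 < 1 + ξ := by linarith
  set m := 2 * ξ / (1 + ξ)
  have hm : |m| < 1 := by
    rw [abs_of_nonneg (by positivity), div_lt_one hξ]
    linarith
  have hfactor : ∀ ψ, 1 - ξ * cos ψ = (1 + ξ) * (1 - m * ((1 + cos ψ) / 2)) := fun ψ => by
    simp only [m]
    field_simp
    ring
  have hpos : ∀ ψ, 0 ≤ 1 - m * ((1 + cos ψ) / 2) := fun ψ => by
    have : 0 ≤ 1 - ξ * cos ψ := by nlinarith [cos_le_one ψ, neg_one_le_cos ψ]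
    rw [hfactor] at this
    exact nonneg_of_mul_nonneg_right (by linarith) hξ
  calc ∫ ψ in (0:ℝ)..π, (1 - ξ * cos ψ) ^ (-(3/2) : ℝ)
      = ∫ ψ in (0:ℝ)..π,
          (1 + ξ) ^ (-(3/2) : ℝ) * (1 - m * ((1 + cos ψ) / 2)) ^ (-(3/2) : ℝ) :=
        integral_congr fun ψ _ => by rw [hfactor, mul_rpow hξ.le (hpos ψ)]
    _ = (1 + ξ) ^ (-(3/2) : ℝ) * (π * hyp2F1 (1/2) (3/2) 1 m) := by
        rw [intervalIntegral.integral_const_mul, integral_one_sub_mul_one_add_cos_rpow_neg _ hm]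
    _ = π / (1 + ξ) ^ ((3/2) : ℝ) * hyp2F1 (1/2) (3/2) 1 m := by
        rw [rpow_neg hξ.le]
        ring
end

section
/- Let a < b be reals, ρ ≠ −1 a real number with ρ > −1, and f : [a,b] → ℝ continuous, with 0 < a. Then for all x ∈ [a,b], the iterated integral ∫_a^x τ₁^ρ (∫_a^{τ₁} τ^ρ f(τ) dτ) dτ₁ equals (1/(ρ+1)) ∫_a^x (x^{ρ+1} − τ^{ρ+1}) τ^ρ f(τ) dτ. -/
/-! Integrate by parts with `u t = ∫ τ in a..t, τ ^ ρ * f τ` and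
`v t = (t ^ (ρ + 1) - x ^ (ρ + 1)) / (ρ + 1)`, a primitive of `t ^ ρ` chosen to vanish at `t = x`.
Both boundary terms vanish (`u a = 0`, `v x = 0`), leaving `-∫ u' v`, which is the right-hand
side. -/

open Real Set intervalIntegral
open scoped Interval

theorem integral_deriv_mul_primitive_eq_integral_sub_mul {a x : ℝ} {φ φ' h : ℝ → ℝ}
    (hφ : ContinuousOn φ [[a, x]])
    (hφφ' : ∀ t ∈ Ioo (min a x) (max a x), HasDerivAt φ (φ' t) t)
    (hφ' : IntervalIntegrable φ' MeasureTheory.volume a x) (hh : ContinuousOn h [[a, x]]) :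
    ∫ t in a..x, φ' t * ∫ τ in a..t, h τ = ∫ t in a..x, (φ x - φ t) * h t := by
  have hprim : ∀ t ∈ Ioo (min a x) (max a x),
      HasDerivAt (fun t => ∫ τ in a..t, h τ) (h t) t := by
    intro t ht
    have hat : [[a, t]] ⊆ [[a, x]] := uIcc_subset_uIcc_left (Ioo_subset_Icc_self ht)
    exact integral_hasDerivAt_right ((hh.mono hat).intervalIntegrable)
      ((hh.mono Ioo_subset_Icc_self).stronglyMeasurableAtFilter isOpen_Ioo t ht)
      (hh.continuousAt (Icc_mem_nhds ht.1 ht.2))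
  have parts := integral_mul_deriv_eq_deriv_mul_of_hasDerivAt (v := fun t => φ t - φ x)
    (continuousOn_primitive_interval (hh.integrableOn_compact isCompact_uIcc))
    (hφ.sub continuousOn_const) hprim (fun t ht => (hφφ' t ht).sub_const (φ x))
    hh.intervalIntegrable hφ'
  calc ∫ t in a..x, φ' t * ∫ τ in a..t, h τ
      = ∫ t in a..x, (∫ τ in a..t, h τ) * φ' t := by simp only [mul_comm]
    _ = -∫ t in a..x, h t * (φ t - φ x) := by simpa using parts
    _ = ∫ t in a..x, (φ x - φ t) * h t := by
      rw [← integral_neg]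
      congr 1 with t
      ring

theorem hasDerivAt_rpow_add_one_div {ρ t : ℝ} (hρ : ρ ≠ -1) (ht : t ≠ 0) :
    HasDerivAt (fun t => t ^ (ρ + 1) / (ρ + 1)) (t ^ ρ) t := by
  have hρ1 : ρ + 1 ≠ 0 := fun h => hρ (eq_neg_of_add_eq_zero_left h)
  simpa [mul_div_cancel_left₀ _ hρ1] using
    (hasDerivAt_rpow_const (p := ρ + 1) (.inl ht)).div_const (ρ + 1)

theorem dirichlet_technique_general (a b ρ : ℝ) (ha : 0 < a)
    (hρ' : ρ ≠ -1) (f : ℝ → ℝ) (hf : ContinuousOn f (Set.Icc a b)) :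
    ∀ x ∈ Set.Icc a b,
      (∫ τ₁ in a..x, τ₁ ^ ρ * ∫ τ in a..τ₁, τ ^ ρ * f τ) =
        (1 / (ρ + 1)) * ∫ τ in a..x, (x ^ (ρ + 1) - τ ^ (ρ + 1)) * τ ^ ρ * f τ := by
  rintro x ⟨hax, hxb⟩
  have hne : ∀ t ∈ [[a, x]], t ≠ 0 := fun t ht =>
    (ha.trans_le (uIcc_of_le hax ▸ ht).1).ne'
  have hφ : ∀ t ∈ [[a, x]], HasDerivAt (fun t => t ^ (ρ + 1) / (ρ + 1)) (t ^ ρ) t :=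
    fun t ht => hasDerivAt_rpow_add_one_div hρ' (hne t ht)
  have hpow : ContinuousOn (fun t => t ^ ρ) [[a, x]] := fun t ht =>
    (continuousAt_rpow_const t ρ (.inl (hne t ht))).continuousWithinAt
  have hfx : ContinuousOn f [[a, x]] := hf.mono (uIcc_of_le hax ▸ Icc_subset_Icc_right hxb)
  rw [integral_deriv_mul_primitive_eq_integral_sub_mul (h := fun t => t ^ ρ * f t)
    (fun t ht => (hφ t ht).continuousAt.continuousWithinAt)
    (fun t ht => hφ t (Ioo_subset_Icc_self ht)) hpow.intervalIntegrable (hpow.mul hfx),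
    ← integral_const_mul]
  congr 1 with t
  ring

theorem dirichlet_technique (a b ρ : ℝ) (hab : a < b) (ha : 0 < a)
    (hρ : -1 < ρ) (hρ' : ρ ≠ -1) (f : ℝ → ℝ) (hf : ContinuousOn f (Set.Icc a b)) :
    ∀ x ∈ Set.Icc a b,
      (∫ τ₁ in a..x, τ₁ ^ ρ * ∫ τ in a..τ₁, τ ^ ρ * f τ) =
        (1 / (ρ + 1)) * ∫ τ in a..x, (x ^ (ρ + 1) - τ ^ (ρ + 1)) * τ ^ ρ * f τ :=
  dirichlet_technique_general a b ρ ha hρ' f hf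
end
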